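/- arXiv:1911.11501 — 3 statements merged into one kernel-verified Lean document; each statement's English description precedes it below -/
import Mathlib

section
/- Let A ⊆ ℝ^k be closed and convex, and for parameters θ, θ' let h_θ, h_{θ'} : A → ℝ be C¹ and λ-convex with λ > 0, with minimizers α̂ = argmin h_θ and α̂' = argmin h_{θ'} over A. Then |α̂ - α̂'| ≤ (2λ)^{-1} |∇h_θ(α̂) - ∇h_{θ'}(α̂)|. -/
/-!
First-order optimality on the convex set gives `⟪α̂' - α̂, ∇h(α̂)⟫ ≥ 0` and
`⟪α̂ - α̂', ∇h'(α̂')⟫ ≥ 0`. Adding these to the strong monotonicity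
`2λ‖α̂' - α̂‖² ≤ ⟪α̂' - α̂, ∇h'(α̂') - ∇h'(α̂)⟫` of `∇h'` yields
`2λ‖α̂' - α̂‖² ≤ ⟪α̂' - α̂, ∇h(α̂) - ∇h'(α̂)⟫`, and Cauchy–Schwarz finishes.
-/

open scoped RealInnerProductSpace

section

variable {E : Type*} [NormedAddCommGroup E] [InnerProductSpace ℝ E] [CompleteSpace E]
  {s : Set E} {f : E → ℝ} {x y : E}

theorem Convex.inner_sub_gradient_nonneg_of_isMinOn (hs : Convex ℝ s)
    (hf : DifferentiableAt ℝ f x) (hmin : IsMinOn f s x) (hx : x ∈ s) (hy : y ∈ s) :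
    0 ≤ ⟪y - x, gradient f x⟫ := by
  have hcone : y - x ∈ posTangentConeAt s x :=
    sub_mem_posTangentConeAt_of_segment_subset (hs.segment_subset hx hy)
  rw [real_inner_comm, gradient, InnerProductSpace.toDual_symm_apply]
  exact hmin.localize.hasFDerivWithinAt_nonneg hf.hasFDerivAt.hasFDerivWithinAt hcone

theorem two_mul_sq_norm_le_inner_sub_gradient {lam : ℝ}
    (hconv : ∀ α ∈ s, ∀ α' ∈ s, lam * ‖α' - α‖ ^ 2 ≤ f α' - f α - ⟪α' - α, gradient f α⟫)
    (hx : x ∈ s) (hy : y ∈ s) :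
    2 * lam * ‖y - x‖ ^ 2 ≤ ⟪y - x, gradient f y - gradient f x⟫ := by
  have hxy := hconv x hx y hy
  have hyx := hconv y hy x hx
  rw [norm_sub_rev, ← neg_sub y x, inner_neg_left] at hyx
  rw [inner_sub_right]
  linarith

end

theorem dist_minimizers_le_gradient_diff_general {k : ℕ}
    (A : Set (EuclideanSpace ℝ (Fin k)))
    (hA_convex : Convex ℝ A)
    (h h' : EuclideanSpace ℝ (Fin k) → ℝ)
    (hh : ContDiff ℝ 1 h) (hh' : ContDiff ℝ 1 h')
    (lam : ℝ) (hlam : 0 < lam)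
    (hconv' : ∀ α ∈ A, ∀ α' ∈ A,
      lam * ‖α' - α‖ ^ 2 ≤ h' α' - h' α - ⟪α' - α, gradient h' α⟫)
    (αhat αhat' : EuclideanSpace ℝ (Fin k))
    (hαhatA : αhat ∈ A) (hαhatA' : αhat' ∈ A)
    (hmin : ∀ b ∈ A, h αhat ≤ h b) (hmin' : ∀ b ∈ A, h' αhat' ≤ h' b) :
    ‖αhat - αhat'‖ ≤ (2 * lam)⁻¹ * ‖gradient h αhat - gradient h' αhat‖ := by
  set d := αhat' - αhat
  set g := gradient h αhat - gradient h' αhat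
  have hvi : 0 ≤ ⟪d, gradient h αhat⟫ :=
    hA_convex.inner_sub_gradient_nonneg_of_isMinOn (hh.differentiable one_ne_zero _)
      hmin hαhatA hαhatA'
  have hvi' : 0 ≤ ⟪αhat - αhat', gradient h' αhat'⟫ :=
    hA_convex.inner_sub_gradient_nonneg_of_isMinOn (hh'.differentiable one_ne_zero _)
      hmin' hαhatA' hαhatA
  rw [← neg_sub, inner_neg_left] at hvi'
  have hmono := two_mul_sq_norm_le_inner_sub_gradient hconv' hαhatA hαhatA'
  have key : 2 * lam * ‖d‖ ^ 2 ≤ ‖d‖ * ‖g‖ :=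
    calc 2 * lam * ‖d‖ ^ 2 ≤ ⟪d, g⟫ := by
          rw [inner_sub_right] at hmono ⊢
          linarith
      _ ≤ ‖d‖ * ‖g‖ := real_inner_le_norm d g
  rw [norm_sub_rev, inv_mul_eq_div, le_div_iff₀ (by positivity)]
  rcases (norm_nonneg d).eq_or_lt with hd | hd
  · rw [← hd, zero_mul]
    exact norm_nonneg g
  · nlinarith

/-- Stability of minimizers of λ-convex functions with respect to the parameter:
`‖α̂ - α̂'‖ ≤ (2λ)⁻¹ ‖∇h_θ(α̂) - ∇h_θ'(α̂)‖`. -/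
theorem dist_minimizers_le_gradient_diff {k : ℕ}
    (A : Set (EuclideanSpace ℝ (Fin k)))
    (hA_ne : A.Nonempty) (hA_closed : IsClosed A) (hA_convex : Convex ℝ A)
    (h h' : EuclideanSpace ℝ (Fin k) → ℝ)
    (hh : ContDiff ℝ 1 h) (hh' : ContDiff ℝ 1 h')
    (lam : ℝ) (hlam : 0 < lam)
    (hconv : ∀ α ∈ A, ∀ α' ∈ A,
      lam * ‖α' - α‖ ^ 2 ≤ h α' - h α - ⟪α' - α, gradient h α⟫)
    (hconv' : ∀ α ∈ A, ∀ α' ∈ A,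
      lam * ‖α' - α‖ ^ 2 ≤ h' α' - h' α - ⟪α' - α, gradient h' α⟫)
    (αhat αhat' : EuclideanSpace ℝ (Fin k))
    (hαhatA : αhat ∈ A) (hαhatA' : αhat' ∈ A)
    (hmin : ∀ b ∈ A, h αhat ≤ h b) (hmin' : ∀ b ∈ A, h' αhat' ≤ h' b) :
    ‖αhat - αhat'‖ ≤ (2 * lam)⁻¹ * ‖gradient h αhat - gradient h' αhat‖ :=
  dist_minimizers_le_gradient_diff_general A hA_convex h h' hh hh' lam hlam hconv' αhat αhat' hαhatA
    hαhatA' hmin hmin'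
end

section
/- Let b ∈ ℝ^{d×k}, y, y' ∈ ℝ^d, and let f : ℝ^d × A → ℝ be C¹ in (x,α) with ∂_α f Lipschitz in x with constant L, and suppose the map α ↦ ⟨b α, y⟩ + f(x, α) is λ-convex on the closed convex set A ⊆ ℝ^k for every x. If α̂(x,y) denotes the unique minimizer over A of α ↦ ⟨bα, y⟩ + f(x,α), then |α̂(x,y) - α̂(x',y')| ≤ (2λ)^{-1}(|b||y - y'| + L|x - x'|), for all x, x' ∈ ℝ^d and y, y' ∈ ℝ^d. -/
/-!
At a minimizer `α` of a `λ`-convex function over a convex set the first-order term of the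
convexity inequality is nonnegative, so the function grows at least like `λ |β - α|²` away
from `α`. Adding this growth for `α = α̂(x, y)` and `α' = α̂(x', y')` bounds `2λ |α' - α|²`
by the increment from `α` to `α'` of
`H(x, y, ·) - H(x', y', ·) = ⟨b ·, y - y'⟩ + f(x, ·) - f(x', ·)`, which is at most
`(|b| |y - y'| + L |x - x'|) |α' - α|` by Cauchy–Schwarz and the mean value inequality.
-/

open scoped RealInnerProductSpace

theorem norm_sub_le_of_quadratic_growth {E : Type*} [SeminormedAddCommGroup E] {s : Set E}
    {g₁ g₂ : E → ℝ} {a₁ a₂ : E} {lam K : ℝ}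
    (hlam : 0 < lam) (hK : 0 ≤ K) (ha₁ : a₁ ∈ s) (ha₂ : a₂ ∈ s)
    (h₁ : ∀ β ∈ s, lam * ‖β - a₁‖ ^ 2 ≤ g₁ β - g₁ a₁)
    (h₂ : ∀ β ∈ s, lam * ‖β - a₂‖ ^ 2 ≤ g₂ β - g₂ a₂)
    (hpert : (g₁ a₂ - g₂ a₂) - (g₁ a₁ - g₂ a₁) ≤ K * ‖a₂ - a₁‖) :
    ‖a₁ - a₂‖ ≤ (2 * lam)⁻¹ * K := by
  have hsum : 2 * lam * ‖a₂ - a₁‖ * ‖a₂ - a₁‖ ≤ K * ‖a₂ - a₁‖ := by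
    have h₂a₁ := h₂ a₁ ha₁
    rw [norm_sub_rev] at h₂a₁
    nlinarith [h₁ a₂ ha₂]
  rw [norm_sub_rev, inv_mul_eq_div, le_div_iff₀ (by positivity)]
  rcases (norm_nonneg (a₂ - a₁)).eq_or_lt with hzero | hpos
  · rw [← hzero]
    linarith
  · linarith [le_of_mul_le_mul_right hsum hpos]

variable {E : Type*} [NormedAddCommGroup E] [InnerProductSpace ℝ E] [CompleteSpace E]

theorem IsMinOn.inner_gradient_nonneg {s : Set E} {g : E → ℝ} {a β : E}
    (hmin : IsMinOn g s a) (hs : Convex ℝ s) (ha : a ∈ s) (hβ : β ∈ s)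
    (hg : DifferentiableAt ℝ g a) : 0 ≤ ⟪β - a, gradient g a⟫ := by
  rw [real_inner_comm, gradient, InnerProductSpace.toDual_symm_apply]
  exact hmin.localize.hasFDerivWithinAt_nonneg hg.hasFDerivAt.hasFDerivWithinAt
    (sub_mem_posTangentConeAt_of_segment_subset (hs.segment_subset ha hβ))

theorem IsMinOn.mul_norm_sub_sq_le {s : Set E} {g : E → ℝ} {a : E} {lam : ℝ}
    (hmin : IsMinOn g s a) (hs : Convex ℝ s) (ha : a ∈ s) (hg : DifferentiableAt ℝ g a)
    (hconv : ∀ β ∈ s, lam * ‖β - a‖ ^ 2 ≤ g β - g a - ⟪β - a, gradient g a⟫) :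
    ∀ β ∈ s, lam * ‖β - a‖ ^ 2 ≤ g β - g a := fun β hβ => by
  linarith [hconv β hβ, hmin.inner_gradient_nonneg hs ha hβ hg]

theorem sub_sub_sub_le_of_norm_gradient_sub_le {g₁ g₂ : E → ℝ} {M : ℝ}
    (hg₁ : Differentiable ℝ g₁) (hg₂ : Differentiable ℝ g₂)
    (hM : ∀ β, ‖gradient g₁ β - gradient g₂ β‖ ≤ M) (a b : E) :
    (g₁ b - g₂ b) - (g₁ a - g₂ a) ≤ M * ‖b - a‖ := by
  have hderiv : ∀ β ∈ Set.univ, ‖fderiv ℝ (g₁ - g₂) β‖ ≤ M := fun β _ => by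
    rw [fderiv_sub (hg₁ β) (hg₂ β), ← (InnerProductSpace.toDual ℝ E).symm.norm_map,
      map_sub]
    exact hM β
  have hmv := Convex.norm_image_sub_le_of_norm_fderiv_le (fun β _ => (hg₁.sub hg₂) β) hderiv
    convex_univ (Set.mem_univ a) (Set.mem_univ b)
  exact (le_abs_self _).trans ((Real.norm_eq_abs _).symm.trans_le hmv)

theorem minimizer_lipschitz_in_x_y_general {d k : ℕ}
    (A : Set (EuclideanSpace ℝ (Fin k)))
    (hA_convex : Convex ℝ A)
    (lam L : ℝ) (hlam : 0 < lam) (hL : 0 ≤ L)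
    (b : EuclideanSpace ℝ (Fin k) →L[ℝ] EuclideanSpace ℝ (Fin d))
    (f : EuclideanSpace ℝ (Fin d) → EuclideanSpace ℝ (Fin k) → ℝ)
    (hf_diff : ∀ x, ContDiff ℝ 1 (f x))
    (hf_lip : ∀ x x' α, ‖gradient (f x) α - gradient (f x') α‖ ≤ L * ‖x - x'‖)
    (H : EuclideanSpace ℝ (Fin d) → EuclideanSpace ℝ (Fin d) →
      EuclideanSpace ℝ (Fin k) → ℝ)
    (hH : ∀ x y α, H x y α = ⟪b α, y⟫ + f x α)
    (hconv : ∀ x y, ∀ α ∈ A, ∀ α' ∈ A,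
      lam * ‖α' - α‖ ^ 2 ≤ H x y α' - H x y α - ⟪α' - α, gradient (H x y) α⟫)
    (αhat : EuclideanSpace ℝ (Fin d) → EuclideanSpace ℝ (Fin d) →
      EuclideanSpace ℝ (Fin k))
    (hmem : ∀ x y, αhat x y ∈ A)
    (hmin : ∀ x y, ∀ β ∈ A, H x y (αhat x y) ≤ H x y β) :
    ∀ x x' y y', ‖αhat x y - αhat x' y'‖
      ≤ (2 * lam)⁻¹ * (‖b‖ * ‖y - y'‖ + L * ‖x - x'‖) := by
  have hf_diff' x : Differentiable ℝ (f x) := (hf_diff x).differentiable one_ne_zero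
  have hH_diff x y : Differentiable ℝ (H x y) := by
    rw [funext (hH x y)]
    exact (b.differentiable.inner ℝ (differentiable_const y)).add (hf_diff' x)
  have hgrowth x y :
      ∀ β ∈ A, lam * ‖β - αhat x y‖ ^ 2 ≤ H x y β - H x y (αhat x y) :=
    IsMinOn.mul_norm_sub_sq_le (hmin x y) hA_convex (hmem x y) (hH_diff x y _)
      (hconv x y _ (hmem x y))
  intro x x' y y'
  refine norm_sub_le_of_quadratic_growth hlam (by positivity) (hmem x y) (hmem x' y')
    (hgrowth x y) (hgrowth x' y') ?_
  set δ := αhat x' y' - αhat x y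
  have hb : ⟪b δ, y - y'⟫ ≤ ‖b‖ * ‖y - y'‖ * ‖δ‖ := calc
    ⟪b δ, y - y'⟫ ≤ ‖b δ‖ * ‖y - y'‖ := real_inner_le_norm _ _
    _ ≤ ‖b‖ * ‖δ‖ * ‖y - y'‖ := by gcongr; exact b.le_opNorm δ
    _ = ‖b‖ * ‖y - y'‖ * ‖δ‖ := by ring
  have hf := sub_sub_sub_le_of_norm_gradient_sub_le (hf_diff' x) (hf_diff' x') (hf_lip x x')
    (αhat x y) (αhat x' y')
  calc (H x y (αhat x' y') - H x' y' (αhat x' y')) - (H x y (αhat x y) - H x' y' (αhat x y))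
      = ⟪b δ, y - y'⟫ + ((f x (αhat x' y') - f x' (αhat x' y'))
          - (f x (αhat x y) - f x' (αhat x y))) := by
        simp only [δ, hH, map_sub, inner_sub_left, inner_sub_right]
        ring
    _ ≤ (‖b‖ * ‖y - y'‖ + L * ‖x - x'‖) * ‖δ‖ := by linarith

/-- Lipschitz continuity in `(x, y)` of the minimizer of the reduced Hamiltonian
`α ↦ ⟪bα, y⟫ + f(x, α)` over a closed convex set `A`. -/
theorem minimizer_lipschitz_in_x_y {d k : ℕ}
    (A : Set (EuclideanSpace ℝ (Fin k)))
    (hA_ne : A.Nonempty) (hA_closed : IsClosed A) (hA_convex : Convex ℝ A)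
    (lam L : ℝ) (hlam : 0 < lam) (hL : 0 ≤ L)
    (b : EuclideanSpace ℝ (Fin k) →L[ℝ] EuclideanSpace ℝ (Fin d))
    (f : EuclideanSpace ℝ (Fin d) → EuclideanSpace ℝ (Fin k) → ℝ)
    (hf_diff : ∀ x, ContDiff ℝ 1 (f x))
    (hf_lip : ∀ x x' α, ‖gradient (f x) α - gradient (f x') α‖ ≤ L * ‖x - x'‖)
    (H : EuclideanSpace ℝ (Fin d) → EuclideanSpace ℝ (Fin d) →
      EuclideanSpace ℝ (Fin k) → ℝ)
    (hH : ∀ x y α, H x y α = ⟪b α, y⟫ + f x α)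
    (hconv : ∀ x y, ∀ α ∈ A, ∀ α' ∈ A,
      lam * ‖α' - α‖ ^ 2 ≤ H x y α' - H x y α - ⟪α' - α, gradient (H x y) α⟫)
    (αhat : EuclideanSpace ℝ (Fin d) → EuclideanSpace ℝ (Fin d) →
      EuclideanSpace ℝ (Fin k))
    (hmem : ∀ x y, αhat x y ∈ A)
    (hmin : ∀ x y, ∀ β ∈ A, H x y (αhat x y) ≤ H x y β) :
    ∀ x x' y y', ‖αhat x y - αhat x' y'‖
      ≤ (2 * lam)⁻¹ * (‖b‖ * ‖y - y'‖ + L * ‖x - x'‖) :=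
  minimizer_lipschitz_in_x_y_general A hA_convex lam L hlam hL b f hf_diff hf_lip H hH hconv αhat
    hmem hmin
end

section
/- The truncation operator μ ↦ φ_n ∘ μ, where φ_n ∘ μ is the push-forward of μ by x ↦ n x / max(M₂(μ), n), is continuous on (𝒫₂(ℝ^d), W₂): if W₂(μ_k, μ) → 0 then W₂(φ_n ∘ μ_k, φ_n ∘ μ) → 0. -/
open MeasureTheory Filter

/-- The 2-Wasserstein distance between probability measures on `ℝ^d`. -/
noncomputable def W2 {d : ℕ}
    (μ ν : Measure (EuclideanSpace ℝ (Fin d))) : ℝ :=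
  sInf { r : ℝ |
    ∃ π : Measure (EuclideanSpace ℝ (Fin d) × EuclideanSpace ℝ (Fin d)),
      IsProbabilityMeasure π ∧ π.map Prod.fst = μ ∧ π.map Prod.snd = ν ∧
      r = Real.sqrt (∫ p, ‖p.1 - p.2‖ ^ 2 ∂π) }

/-- The second moment `M₂(μ) = (∫ |x|² dμ)^{1/2}`. -/
noncomputable def M2 {d : ℕ} (μ : Measure (EuclideanSpace ℝ (Fin d))) : ℝ :=
  Real.sqrt (∫ x, ‖x‖ ^ 2 ∂μ)

/-- The truncation `φ_n ∘ μ`: push-forward of `μ` by `x ↦ n x / max(M₂(μ), n)`. -/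
noncomputable def phi {d : ℕ} (n : ℕ)
    (μ : Measure (EuclideanSpace ℝ (Fin d))) : Measure (EuclideanSpace ℝ (Fin d)) :=
  μ.map (fun x => ((n : ℝ) / max (M2 μ) (n : ℝ)) • x)

/-!
Take couplings `π_k` of `μ_k` and `μ` whose cost `D_k = ‖X - Y‖_{L²(π_k)}` exceeds `W₂(μ_k, μ)` by
at most `1/(k+1)`. Since `M₂(μ_k) = ‖X‖_{L²(π_k)}` and `M₂(μ) = ‖Y‖_{L²(π_k)}`, the triangle
inequality in `L²` gives `|M₂(μ_k) - M₂(μ)| ≤ D_k`, so the scale factors `c_k = n / max(M₂(μ_k), n)`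
converge to `c = n / max(M₂(μ), n)`. Pushing `π_k` forward by `(x, y) ↦ (c_k x, c y)` couples the
truncations, and `‖c_k X - c Y‖ ≤ |c_k| ‖X - Y‖ + |c_k - c| ‖Y‖` in `L²(π_k)` tends to `0`.
-/

section L2

variable {α E : Type*} [MeasurableSpace α] {μ : Measure α} [NormedAddCommGroup E]

theorem MeasureTheory.MemLp.sqrt_integral_norm_sq_eq_norm_toLp {f : α → E} (hf : MemLp f 2 μ) :
    √(∫ x, ‖f x‖ ^ 2 ∂μ) = ‖hf.toLp f‖ := by
  rw [Lp.norm_toLp, hf.eLpNorm_eq_integral_rpow_norm two_ne_zero ENNReal.ofNat_ne_top,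
    ENNReal.toReal_ofReal (by positivity)]
  norm_num [Real.sqrt_eq_rpow]

theorem sqrt_integral_norm_add_sq_le {f g : α → E} (hf : MemLp f 2 μ) (hg : MemLp g 2 μ) :
    √(∫ x, ‖f x + g x‖ ^ 2 ∂μ) ≤ √(∫ x, ‖f x‖ ^ 2 ∂μ) + √(∫ x, ‖g x‖ ^ 2 ∂μ) := by
  have hfg := (hf.add hg).sqrt_integral_norm_sq_eq_norm_toLp
  simp only [Pi.add_apply] at hfg
  rw [hfg, hf.sqrt_integral_norm_sq_eq_norm_toLp, hg.sqrt_integral_norm_sq_eq_norm_toLp,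
    MemLp.toLp_add]
  exact norm_add_le _ _

theorem abs_sqrt_integral_norm_sq_sub_le {f g : α → E} (hf : MemLp f 2 μ) (hg : MemLp g 2 μ) :
    |√(∫ x, ‖f x‖ ^ 2 ∂μ) - √(∫ x, ‖g x‖ ^ 2 ∂μ)| ≤ √(∫ x, ‖f x - g x‖ ^ 2 ∂μ) := by
  have hfg := (hf.sub hg).sqrt_integral_norm_sq_eq_norm_toLp
  simp only [Pi.sub_apply] at hfg
  rw [hfg, hf.sqrt_integral_norm_sq_eq_norm_toLp, hg.sqrt_integral_norm_sq_eq_norm_toLp,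
    MemLp.toLp_sub]
  exact abs_norm_sub_norm_le _ _

theorem sqrt_integral_norm_smul_sq [NormedSpace ℝ E] (c : ℝ) (f : α → E) :
    √(∫ x, ‖c • f x‖ ^ 2 ∂μ) = |c| * √(∫ x, ‖f x‖ ^ 2 ∂μ) := by
  simp_rw [norm_smul, mul_pow, integral_const_mul, Real.sqrt_mul (sq_nonneg _),
    Real.sqrt_sq_eq_abs, Real.norm_eq_abs, abs_abs]

theorem sqrt_integral_norm_smul_sub_smul_sq_le [NormedSpace ℝ E] {f g : α → E}
    (hf : MemLp f 2 μ) (hg : MemLp g 2 μ) (c c' : ℝ) :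
    √(∫ x, ‖c • f x - c' • g x‖ ^ 2 ∂μ)
      ≤ |c| * √(∫ x, ‖f x - g x‖ ^ 2 ∂μ) + |c - c'| * √(∫ x, ‖g x‖ ^ 2 ∂μ) := by
  have hsplit : ∀ x, c • f x - c' • g x = c • (f x - g x) + (c - c') • g x := fun x => by
    rw [smul_sub, sub_smul]; abel
  simp_rw [hsplit, ← sqrt_integral_norm_smul_sq]
  exact sqrt_integral_norm_add_sq_le ((hf.sub hg).const_smul c) (hg.const_smul (c - c'))

end L2

theorem memLp_two_of_map_eq {β F : Type*} [MeasurableSpace β] [NormedAddCommGroup F]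
    [MeasurableSpace F] [OpensMeasurableSpace F] [SecondCountableTopology F]
    {π : Measure β} {ν : Measure F} {g : β → F}
    (hg : Measurable g) (h : π.map g = ν) (hν : Integrable (fun x => ‖x‖ ^ 2) ν) :
    MemLp g 2 π := by
  subst h
  exact (memLp_two_iff_integrable_sq_norm hg.aestronglyMeasurable).2
    ((integrable_map_measure (continuous_norm.pow 2).aestronglyMeasurable hg.aemeasurable).1 hν)

theorem continuous_div_max_self {a : ℝ} (ha : 0 ≤ a) : Continuous fun t => a / max t a := by
  rcases ha.eq_or_lt with rfl | ha
  · simpa using continuous_const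
  · exact continuous_const.div (continuous_id.max continuous_const)
      fun t => (ha.trans_le (le_max_right t a)).ne'

section Wasserstein

variable {d : ℕ}

local notation "E" => EuclideanSpace ℝ (Fin d)

theorem W2_nonneg (μ ν : Measure E) : 0 ≤ W2 μ ν :=
  Real.sInf_nonneg fun _ ⟨_, _, _, _, hr⟩ => hr ▸ Real.sqrt_nonneg _

theorem W2_le_of_coupling {μ ν : Measure E} {π : Measure (E × E)} [IsProbabilityMeasure π]
    (h1 : π.map Prod.fst = μ) (h2 : π.map Prod.snd = ν) :
    W2 μ ν ≤ √(∫ p, ‖p.1 - p.2‖ ^ 2 ∂π) :=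
  csInf_le ⟨0, fun _ ⟨_, _, _, _, hr⟩ => hr ▸ Real.sqrt_nonneg _⟩ ⟨π, inferInstance, h1, h2, rfl⟩

theorem exists_coupling_lt_W2_add (μ ν : Measure E) [IsProbabilityMeasure μ]
    [IsProbabilityMeasure ν] {ε : ℝ} (hε : 0 < ε) :
    ∃ π : Measure (E × E), IsProbabilityMeasure π ∧ π.map Prod.fst = μ ∧
      π.map Prod.snd = ν ∧ √(∫ p, ‖p.1 - p.2‖ ^ 2 ∂π) < W2 μ ν + ε := by
  obtain ⟨_, ⟨π, hπ, h1, h2, rfl⟩, hlt⟩ :=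
    exists_lt_of_csInf_lt (by exact ⟨_, μ.prod ν, inferInstance, by simp, by simp, rfl⟩)
      (lt_add_of_pos_right (W2 μ ν) hε)
  exact ⟨π, hπ, h1, h2, hlt⟩

theorem W2_map_smul_le {μ ν : Measure E} {π : Measure (E × E)} [IsProbabilityMeasure π]
    (h1 : π.map Prod.fst = μ) (h2 : π.map Prod.snd = ν) (c c' : ℝ) :
    W2 (μ.map (c • ·)) (ν.map (c' • ·)) ≤ √(∫ p, ‖c • p.1 - c' • p.2‖ ^ 2 ∂π) := by
  have hT : Measurable fun p : E × E => (c • p.1, c' • p.2) := by fun_prop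
  have := Measure.isProbabilityMeasure_map (μ := π) hT.aemeasurable
  calc W2 (μ.map (c • ·)) (ν.map (c' • ·))
      ≤ √(∫ q, ‖q.1 - q.2‖ ^ 2 ∂(π.map fun p => (c • p.1, c' • p.2))) := by
        refine W2_le_of_coupling ?_ ?_
        · rw [Measure.map_map measurable_fst hT, ← h1,
            Measure.map_map (by fun_prop) measurable_fst]
          rfl
        · rw [Measure.map_map measurable_snd hT, ← h2,
            Measure.map_map (by fun_prop) measurable_snd]
          rfl
    _ = _ := by rw [integral_map hT.aemeasurable (by fun_prop)]

theorem M2_eq_of_map_eq {β : Type*} [MeasurableSpace β] {π : Measure β} {μ : Measure E}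
    {g : β → E} (hg : Measurable g) (h : π.map g = μ) :
    M2 μ = √(∫ p, ‖g p‖ ^ 2 ∂π) := by
  rw [M2, ← h, integral_map hg.aemeasurable (by fun_prop)]

noncomputable def truncScale (n : ℕ) (μ : Measure E) : ℝ := n / max (M2 μ) n

theorem phi_eq_map_smul (n : ℕ) (μ : Measure E) : phi n μ = μ.map (truncScale n μ • ·) := rfl

theorem abs_M2_sub_M2_le_of_coupling {μ ν : Measure E} {π : Measure (E × E)}
    (h1 : π.map Prod.fst = μ) (h2 : π.map Prod.snd = ν)
    (hμ : Integrable (fun x => ‖x‖ ^ 2) μ) (hν : Integrable (fun x => ‖x‖ ^ 2) ν) :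
    |M2 μ - M2 ν| ≤ √(∫ p, ‖p.1 - p.2‖ ^ 2 ∂π) := by
  rw [M2_eq_of_map_eq measurable_fst h1, M2_eq_of_map_eq measurable_snd h2]
  exact abs_sqrt_integral_norm_sq_sub_le (memLp_two_of_map_eq measurable_fst h1 hμ)
    (memLp_two_of_map_eq measurable_snd h2 hν)

theorem W2_phi_le_of_coupling {μ ν : Measure E} {π : Measure (E × E)} [IsProbabilityMeasure π]
    (h1 : π.map Prod.fst = μ) (h2 : π.map Prod.snd = ν)
    (hμ : Integrable (fun x => ‖x‖ ^ 2) μ) (hν : Integrable (fun x => ‖x‖ ^ 2) ν) (n : ℕ) :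
    W2 (phi n μ) (phi n ν) ≤ |truncScale n μ| * √(∫ p, ‖p.1 - p.2‖ ^ 2 ∂π)
      + |truncScale n μ - truncScale n ν| * M2 ν := by
  rw [phi_eq_map_smul, phi_eq_map_smul, M2_eq_of_map_eq measurable_snd h2]
  exact (W2_map_smul_le h1 h2 _ _).trans <| sqrt_integral_norm_smul_sub_smul_sq_le
    (memLp_two_of_map_eq measurable_fst h1 hμ) (memLp_two_of_map_eq measurable_snd h2 hν) _ _

theorem tendsto_truncScale {μk : ℕ → Measure E} {μ : Measure E}
    (h : Tendsto (fun k => M2 (μk k)) atTop (nhds (M2 μ))) (n : ℕ) :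
    Tendsto (fun k => truncScale n (μk k)) atTop (nhds (truncScale n μ)) :=
  ((continuous_div_max_self n.cast_nonneg).tendsto _).comp h

end Wasserstein

theorem truncation_continuous_in_wasserstein_general {d : ℕ} (n : ℕ)
    (μk : ℕ → Measure (EuclideanSpace ℝ (Fin d)))
    (μ : Measure (EuclideanSpace ℝ (Fin d)))
    (hprob : ∀ k, IsProbabilityMeasure (μk k)) [IsProbabilityMeasure μ]
    (hmom : ∀ k, Integrable (fun x => ‖x‖ ^ 2) (μk k))
    (hμ : Integrable (fun x => ‖x‖ ^ 2) μ)
    (hconv : Tendsto (fun k => W2 (μk k) μ) atTop (nhds 0)) :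
    Tendsto (fun k => W2 (phi n (μk k)) (phi n μ)) atTop (nhds 0) := by
  choose π hπ h1 h2 hlt using fun k =>
    haveI := hprob k
    exists_coupling_lt_W2_add (μk k) μ (Nat.one_div_pos_of_nat (n := k))
  set D := fun k => √(∫ p, ‖p.1 - p.2‖ ^ 2 ∂π k)
  have hD : Tendsto D atTop (nhds 0) :=
    squeeze_zero (fun _ => Real.sqrt_nonneg _) (fun k => (hlt k).le)
      (by simpa using hconv.add tendsto_one_div_add_atTop_nhds_zero_nat)
  have hM2 : Tendsto (fun k => M2 (μk k)) atTop (nhds (M2 μ)) :=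
    tendsto_iff_dist_tendsto_zero.2 <| squeeze_zero (fun _ => dist_nonneg)
      (fun k => abs_M2_sub_M2_le_of_coupling (h1 k) (h2 k) (hmom k) hμ) hD
  have hc := tendsto_truncScale hM2 n
  have hbound : Tendsto (fun k => |truncScale n (μk k)| * D k
      + |truncScale n (μk k) - truncScale n μ| * M2 μ) atTop (nhds 0) := by
    simpa using (hc.abs.mul hD).add ((hc.sub_const (truncScale n μ)).abs.mul_const (M2 μ))
  exact squeeze_zero (fun _ => W2_nonneg _ _)
    (fun k => haveI := hπ k; W2_phi_le_of_coupling (h1 k) (h2 k) (hmom k) hμ n) hbound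

/-- Continuity of the truncation operator `μ ↦ φ_n ∘ μ` on `(𝒫₂(ℝ^d), W₂)`:
if `W₂(μ_k, μ) → 0` then `W₂(φ_n ∘ μ_k, φ_n ∘ μ) → 0`. -/
theorem truncation_continuous_in_wasserstein {d : ℕ} (n : ℕ) (hn : 1 ≤ n)
    (μk : ℕ → Measure (EuclideanSpace ℝ (Fin d)))
    (μ : Measure (EuclideanSpace ℝ (Fin d)))
    (hprob : ∀ k, IsProbabilityMeasure (μk k)) [IsProbabilityMeasure μ]
    (hmom : ∀ k, Integrable (fun x => ‖x‖ ^ 2) (μk k))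
    (hμ : Integrable (fun x => ‖x‖ ^ 2) μ)
    (hconv : Tendsto (fun k => W2 (μk k) μ) atTop (nhds 0)) :
    Tendsto (fun k => W2 (phi n (μk k)) (phi n μ)) atTop (nhds 0) :=
  truncation_continuous_in_wasserstein_general n μk μ hprob hmom hμ hconv
end
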